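/- arXiv:2410.05614 — 2 statements merged into one kernel-verified Lean document; each statement's English description precedes it below -/
import Mathlib

section
/- Under the derivative condition 2f'(u) + q₀|g'(u)|² ≤ K on (0,∞), the truncated functions f_Δ(x) = f(π_Δ(x)) and g_Δ(x) = g(π_Δ(x)) satisfy 2(x−y)(f_Δ(x)−f_Δ(y)) + q₀|g_Δ(x)−g_Δ(y)|² ≤ 2K|x−y|² for all real x, y. -/
open intervalIntegral Set

private lemma trunc_aux
    (f g f' g' : ℝ → ℝ) (q₀ K R : ℝ) (hq : 1 < q₀) (hK : 0 < K) (hR : 1 < R)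
    (hf : ∀ x > (0 : ℝ), HasDerivAt f (f' x) x)
    (hg : ∀ x > (0 : ℝ), HasDerivAt g (g' x) x)
    (hf' : ContinuousOn f' (Set.Ioi 0))
    (hg' : ContinuousOn g' (Set.Ioi 0))
    (hbound : ∀ u > (0 : ℝ), 2 * f' u + q₀ * |g' u| ^ 2 ≤ K)
    (x y : ℝ) (hxy : y ≤ x) :
      2 * (x - y) * (f (max (1 / R) (min x R)) - f (max (1 / R) (min y R)))
          + q₀ * |g (max (1 / R) (min x R)) - g (max (1 / R) (min y R))| ^ 2
        ≤ 2 * K * |x - y| ^ 2 := by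
  have hRpos : (0:ℝ) < R := lt_trans one_pos hR
  have hRinv : (0:ℝ) < 1 / R := by positivity
  set a := max (1 / R) (min y R) with ha
  set b := max (1 / R) (min x R) with hb
  have hab : a ≤ b := max_le_max le_rfl (min_le_min hxy le_rfl)
  have hapos : 0 < a := lt_of_lt_of_le hRinv (le_max_left _ _)
  -- |b - a| ≤ |x - y|
  have hdle : b - a ≤ x - y := by
    have h1 : |b - a| ≤ |min x R - min y R| := by
      rw [hb, ha, max_comm (1/R) (min x R), max_comm (1/R) (min y R)]
      exact abs_max_sub_max_le_abs _ _ _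
    have h2 : |min x R - min y R| ≤ max |x - y| |R - R| := abs_min_sub_min_le_max _ _ _ _
    have h3 : max |x - y| |R - R| = |x - y| := by
      simp [abs_nonneg]
    have := (h1.trans h2).trans_eq h3
    calc b - a ≤ |b - a| := le_abs_self _
      _ ≤ |x - y| := this
      _ = x - y := abs_of_nonneg (by linarith)
  have hsub : Set.uIcc a b ⊆ Set.Ioi 0 := by
    rw [Set.uIcc_of_le hab]
    intro t ht
    exact lt_of_lt_of_le hapos ht.1
  have hpos : ∀ t ∈ Set.Icc a b, (0:ℝ) < t := fun t ht => lt_of_lt_of_le hapos ht.1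
  -- integrability
  have hfint : IntervalIntegrable f' MeasureTheory.volume a b :=
    (hf'.mono hsub).intervalIntegrable
  have hgint : IntervalIntegrable g' MeasureTheory.volume a b :=
    (hg'.mono hsub).intervalIntegrable
  have hg2int : IntervalIntegrable (fun t => g' t ^ 2) MeasureTheory.volume a b :=
    ((hg'.mono hsub).pow 2).intervalIntegrable
  -- FTC
  have hFf : ∫ t in a..b, f' t = f b - f a :=
    intervalIntegral.integral_eq_sub_of_hasDerivAt (fun t ht => hf t (hsub ht)) hfint
  have hFg : ∫ t in a..b, g' t = g b - g a :=
    intervalIntegral.integral_eq_sub_of_hasDerivAt (fun t ht => hg t (hsub ht)) hgint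
  set I := ∫ t in a..b, g' t with hI
  set J := ∫ t in a..b, g' t ^ 2 with hJdef
  set d := b - a with hd
  have hd0 : 0 ≤ d := by linarith
  have hJ0 : 0 ≤ J := intervalIntegral.integral_nonneg hab (fun u _ => sq_nonneg _)
  -- Cauchy-Schwarz : I^2 ≤ d * J
  have hCS : I ^ 2 ≤ d * J := by
    rcases eq_or_lt_of_le hd0 with h | h
    · have hba : b = a := by simp only [hd] at h; linarith
      have hI0 : I = 0 := by rw [hI, hba, intervalIntegral.integral_same]
      rw [hI0]
      simpa using mul_nonneg hd0 hJ0
    · have h0 : 0 ≤ ∫ t in a..b, (d * g' t - I) ^ 2 :=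
        intervalIntegral.integral_nonneg hab (fun u _ => sq_nonneg _)
      have hexp : (∫ t in a..b, (d * g' t - I) ^ 2)
          = d ^ 2 * J - (2 * d * I) * I + I ^ 2 * d := by
        have heq : ∀ t, (d * g' t - I) ^ 2
            = d ^ 2 * g' t ^ 2 - (2 * d * I) * g' t + I ^ 2 := by intro t; ring
        simp_rw [heq]
        rw [intervalIntegral.integral_add ((hg2int.const_mul _).sub (hgint.const_mul _))
              intervalIntegrable_const,
            intervalIntegral.integral_sub (hg2int.const_mul _) (hgint.const_mul _),
            intervalIntegral.integral_const_mul, intervalIntegral.integral_const_mul,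
            intervalIntegral.integral_const, smul_eq_mul]
        ring
      rw [hexp] at h0
      nlinarith [h]
  -- bound on ∫ f'
  have hfle : (∫ t in a..b, f' t) ≤ ∫ t in a..b, (K / 2 - q₀ / 2 * g' t ^ 2) := by
    apply intervalIntegral.integral_mono_on hab hfint
      (intervalIntegrable_const.sub (hg2int.const_mul _))
    intro t ht
    have hb := hbound t (hpos t ht)
    rw [sq_abs] at hb
    linarith
  have hcomp : (∫ t in a..b, (K / 2 - q₀ / 2 * g' t ^ 2)) = d * (K / 2) - q₀ / 2 * J := by
    rw [intervalIntegral.integral_sub intervalIntegrable_const (hg2int.const_mul _),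
        intervalIntegral.integral_const, intervalIntegral.integral_const_mul, smul_eq_mul]
  rw [hcomp] at hfle
  rw [hFf] at hfle
  -- final
  have hs0 : (0:ℝ) ≤ x - y := by linarith
  have habs : |x - y| = x - y := abs_of_nonneg hs0
  have habs2 : |g b - g a| ^ 2 = I ^ 2 := by rw [sq_abs, hFg]
  rw [habs, habs2]
  have hq0 : (0:ℝ) < q₀ := lt_trans one_pos hq
  have h1 := mul_le_mul_of_nonneg_left hfle hs0
  have h2 := mul_le_mul_of_nonneg_left hCS hq0.le
  have h3 : 0 ≤ q₀ * (x - y - d) * J :=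
    mul_nonneg (mul_nonneg hq0.le (by linarith)) hJ0
  have h4 : 0 ≤ K * (x - y) * (x - y - d) :=
    mul_nonneg (mul_nonneg hK.le hs0) (by linarith)
  have h5 : 0 ≤ K * (x - y) ^ 2 := mul_nonneg hK.le (sq_nonneg _)
  clear_value I J d a b
  linarith [h1, h2, h3, h4, h5]

/-- Under the derivative condition `2 f'(u) + q₀ |g'(u)|² ≤ K` on `(0,∞)`,
the truncated functions `f_Δ(x) = f(π(x))`, `g_Δ(x) = g(π(x))` with
`π(x) = max (1/R) (min x R)` satisfy
`2 (x−y)(f_Δ(x)−f_Δ(y)) + q₀ |g_Δ(x)−g_Δ(y)|² ≤ 2K |x−y|²` for all real `x, y`. -/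
theorem truncated_monotonicity
    (f g f' g' : ℝ → ℝ) (q₀ K R : ℝ) (hq : 1 < q₀) (hK : 0 < K) (hR : 1 < R)
    (hf : ∀ x > (0 : ℝ), HasDerivAt f (f' x) x)
    (hg : ∀ x > (0 : ℝ), HasDerivAt g (g' x) x)
    (hf' : ContinuousOn f' (Set.Ioi 0))
    (hg' : ContinuousOn g' (Set.Ioi 0))
    (hbound : ∀ u > (0 : ℝ), 2 * f' u + q₀ * |g' u| ^ 2 ≤ K) :
    ∀ x y : ℝ,
      2 * (x - y) * (f (max (1 / R) (min x R)) - f (max (1 / R) (min y R)))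
          + q₀ * |g (max (1 / R) (min x R)) - g (max (1 / R) (min y R))| ^ 2
        ≤ 2 * K * |x - y| ^ 2 := by
  intro x y
  rcases le_total y x with h | h
  · exact trunc_aux f g f' g' q₀ K R hq hK hR hf hg hf' hg' hbound x y h
  · have := trunc_aux f g f' g' q₀ K R hq hK hR hf hg hf' hg' hbound y x h
    rw [show 2 * (x - y) * (f (max (1 / R) (min x R)) - f (max (1 / R) (min y R)))
        = 2 * (y - x) * (f (max (1 / R) (min y R)) - f (max (1 / R) (min x R))) from by ring,
      abs_sub_comm (g (max (1 / R) (min x R))), abs_sub_comm x y]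
    exact this
end

section
/- In the case 1/R ≤ x ≤ R ≤ y: if 2f'(u) + q₀|g'(u)|² ≤ K on (0,∞) with q₀ > 1, then 2(y−x)(f(R)−f(x)) + q₀|g(R)−g(x)|² ≤ 2K(y−x)². -/
/-!
Write `f R - f x` and `g R - g x` as integrals of `f'` and `g'` over `[x, R]`. Integrating the
derivative bound gives `2 (f R - f x) + q₀ ∫ |g'|² ≤ K (R - x)`, and Cauchy–Schwarz gives
`|g R - g x|² ≤ (R - x) ∫ |g'|² ≤ (y - x) ∫ |g'|²`; multiplying the first bound by
`y - x` and using `R - x ≤ y - x` finishes.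
-/

open MeasureTheory Set

theorem sq_intervalIntegral_le_mul_intervalIntegral_sq {g : ℝ → ℝ} {a b : ℝ} (hab : a ≤ b)
    (hg : IntervalIntegrable g volume a b)
    (hg2 : IntervalIntegrable (fun u => g u ^ 2) volume a b) :
    (∫ u in a..b, g u) ^ 2 ≤ (b - a) * ∫ u in a..b, g u ^ 2 := by
  set I := ∫ u in a..b, g u
  set J := ∫ u in a..b, g u ^ 2
  have hexpand : ∫ u in a..b, ((b - a) * g u - I) ^ 2 = (b - a) * ((b - a) * J - I ^ 2) := by
    have h1 := hg2.const_mul ((b - a) ^ 2)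
    have h2 := hg.const_mul (2 * (b - a) * I)
    have hpt : (fun u => ((b - a) * g u - I) ^ 2)
        = fun u => (b - a) ^ 2 * g u ^ 2 - 2 * (b - a) * I * g u + I ^ 2 := by
      funext u; ring
    rw [hpt, intervalIntegral.integral_add (h1.sub h2) intervalIntegrable_const,
      intervalIntegral.integral_sub h1 h2, intervalIntegral.integral_const_mul,
      intervalIntegral.integral_const_mul, intervalIntegral.integral_const, smul_eq_mul]
    ring
  have hnonneg : 0 ≤ (b - a) * ((b - a) * J - I ^ 2) :=
    hexpand ▸ intervalIntegral.integral_nonneg hab fun u _ => sq_nonneg _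
  rcases hab.eq_or_lt with rfl | hlt
  · simp [I]
  · nlinarith [sub_pos.2 hlt]

theorem two_mul_sub_add_sq_le_of_deriv_bound {f g f' g' : ℝ → ℝ} {q K a b d : ℝ}
    (hab : a ≤ b) (hd : b - a ≤ d) (hq : 0 ≤ q)
    (hf : ∀ u ∈ Icc a b, HasDerivAt f (f' u) u) (hg : ∀ u ∈ Icc a b, HasDerivAt g (g' u) u)
    (hf' : ContinuousOn f' (Icc a b)) (hg' : ContinuousOn g' (Icc a b))
    (hbound : ∀ u ∈ Icc a b, 2 * f' u + q * g' u ^ 2 ≤ K) :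
    2 * d * (f b - f a) + q * (g b - g a) ^ 2 ≤ K * d * (b - a) := by
  rw [← uIcc_of_le hab] at hf hg hf' hg'
  have hfi : IntervalIntegrable f' volume a b := hf'.intervalIntegrable
  have hgi : IntervalIntegrable g' volume a b := hg'.intervalIntegrable
  have hgi2 : IntervalIntegrable (fun u => g' u ^ 2) volume a b := (hg'.pow 2).intervalIntegrable
  have hF : ∫ u in a..b, f' u = f b - f a :=
    intervalIntegral.integral_eq_sub_of_hasDerivAt hf hfi
  have hG : ∫ u in a..b, g' u = g b - g a :=
    intervalIntegral.integral_eq_sub_of_hasDerivAt hg hgi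
  have hCS := sq_intervalIntegral_le_mul_intervalIntegral_sq hab hgi hgi2
  have hbound_int : 2 * (f b - f a) + q * ∫ u in a..b, g' u ^ 2 ≤ K * (b - a) := by
    have := intervalIntegral.integral_mono_on hab ((hfi.const_mul 2).add (hgi2.const_mul q))
      intervalIntegrable_const hbound
    rwa [intervalIntegral.integral_add (hfi.const_mul 2) (hgi2.const_mul q),
      intervalIntegral.integral_const_mul, intervalIntegral.integral_const_mul, hF,
      intervalIntegral.integral_const, smul_eq_mul, mul_comm (b - a)] at this
  have hJ : 0 ≤ ∫ u in a..b, g' u ^ 2 :=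
    intervalIntegral.integral_nonneg hab fun u _ => sq_nonneg _
  rw [hG] at hCS
  nlinarith [mul_le_mul_of_nonneg_left hCS hq, mul_le_mul_of_nonneg_left hbound_int
    (by linarith : 0 ≤ d), mul_nonneg (mul_nonneg hq hJ) (sub_nonneg.2 hd)]

/-- Key case `1/R ≤ x ≤ R ≤ y`: under the derivative bound
`2 f'(u) + q₀ |g'(u)|² ≤ K` on `(0,∞)` with `q₀ > 1`, one has
`2 (y−x)(f(R)−f(x)) + q₀ |g(R)−g(x)|² ≤ 2K (y−x)²`. -/
theorem truncated_monotonicity_key_case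
    (f g f' g' : ℝ → ℝ) (q₀ K R x y : ℝ) (hq : 1 < q₀) (hK : 0 < K) (hR : 1 < R)
    (hf : ∀ u > (0 : ℝ), HasDerivAt f (f' u) u)
    (hg : ∀ u > (0 : ℝ), HasDerivAt g (g' u) u)
    (hf' : ContinuousOn f' (Set.Ioi 0))
    (hg' : ContinuousOn g' (Set.Ioi 0))
    (hbound : ∀ u > (0 : ℝ), 2 * f' u + q₀ * |g' u| ^ 2 ≤ K)
    (hx1 : 1 / R ≤ x) (hxR : x ≤ R) (hRy : R ≤ y) :
    2 * (y - x) * (f R - f x) + q₀ * |g R - g x| ^ 2 ≤ 2 * K * (y - x) ^ 2 := by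
  have hpos : Icc x R ⊆ Ioi 0 := fun u hu =>
    (one_div_pos.2 (by linarith)).trans_le (hx1.trans hu.1)
  have key := two_mul_sub_add_sq_le_of_deriv_bound (d := y - x) hxR (by linarith) (by linarith)
    (fun u hu => hf u (hpos hu)) (fun u hu => hg u (hpos hu)) (hf'.mono hpos) (hg'.mono hpos)
    (fun u hu => sq_abs (g' u) ▸ hbound u (hpos hu))
  rw [sq_abs]
  nlinarith [mul_le_mul_of_nonneg_left (by linarith : R - x ≤ 2 * (y - x))
    (mul_nonneg hK.le (by linarith : 0 ≤ y - x))]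
end
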